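/- Let m ≥ 1 and let G be a simple graph on the vertex set {0, …, m−1} that admits no proper 3-coloring. Then for all unit vectors ψ, φ ∈ ℂ^m ⊗ ℂ³ in decomposed form with amplitudes (α_i, β_{i,j}) and (α'_i, β'_{i,j}), the total rejection probability satisfies R_eq + R_sv + R_edge(G) + R_unif(ψ) ≥ 10⁻¹⁰ · m⁻², where R_eq = 1 − ½(1 + |⟨ψ, φ⟩|²), R_sv = Σ_{i<m} Σ_{j≠j'} |α_i|² |β_{i,j}|² |α'_i|² |β'_{i,j'}|², R_edge(G) = Σ_{{u,v} ∈ E(G)} Σ_{j<3} (|α_u|²|β_{u,j}|²|α'_v|²|β'_{v,j}|² + |α_v|²|β_{v,j}|²|α'_u|²|β'_{u,j}|²), and R_unif(ψ) = ‖((I_m − u_m u_m*) ⊗ u₃u₃*) ψ‖². Consequently, the verifier that performs with probability 1/3 each of the equality, consistency, and uniformity tests rejects with probability at least (1/3)·10⁻¹⁰·m⁻². -/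

import Mathlib

/-!
Suppose `R_eq`, `R_sv` and `R_unif` are all below `δ = 10⁻¹⁰ m⁻²`. A small `R_eq` makes the
measurement distributions of `ψ` and `φ` close, by `(∑ |p - p'|)² ≤ 4 (1 - |⟨ψ, φ⟩|²)`, so the
vertex weights `|α_i|²` and `|α'_i|²` differ by at most `10⁻⁴/m`. Some vertex has weight at least
`1/m`; there a small `R_sv` forces a dominant color, so its color amplitudes add up coherently and
`|α_i ∑_j β_{i,j}|²` is about `1/m`. A small `R_unif` says that the vectors `α_i ∑_j β_{i,j}` are
nearly equal, which spreads this to a lower bound of order `1/m` on every vertex weight. Then a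
small `R_sv` gives every vertex a color dominant in both states; as `G` is not 3-colorable this
coloring has a monochromatic edge, and that edge alone contributes far more than `δ` to `R_edge`.
-/

open Finset ComplexConjugate

noncomputable def toEuc {ι : Type*} [Fintype ι] (f : ι → ℂ) : EuclideanSpace ℂ ι := WithLp.toLp 2 f

theorem norm_sum_sq_le_card_mul {ι E : Type*} [SeminormedAddCommGroup E] (s : Finset ι)
    (b : ι → E) : ‖∑ j ∈ s, b j‖ ^ 2 ≤ #s * ∑ j ∈ s, ‖b j‖ ^ 2 :=
  (pow_le_pow_left₀ (norm_nonneg _) (norm_sum_le _ _) 2).trans sq_sum_le_card_mul_sum_sq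

section Inequalities

variable {ι E : Type*} [Fintype ι] [SeminormedAddCommGroup E]

theorem sq_sum_abs_sq_sub_sq_le (f g : ι → ℝ) (hf : ∀ i, 0 ≤ f i) (hg : ∀ i, 0 ≤ g i)
    (hf1 : ∑ i, f i ^ 2 = 1) (hg1 : ∑ i, g i ^ 2 = 1) :
    (∑ i, |f i ^ 2 - g i ^ 2|) ^ 2 ≤ 4 * (1 - (∑ i, f i * g i) ^ 2) := by
  have hfactor : ∑ i, |f i ^ 2 - g i ^ 2| = ∑ i, (f i + g i) * |f i - g i| := by
    refine sum_congr rfl fun i _ => ?_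
    rw [show f i ^ 2 - g i ^ 2 = (f i + g i) * (f i - g i) by ring, abs_mul,
      abs_of_nonneg (add_nonneg (hf i) (hg i))]
  have hplus : ∑ i, (f i + g i) ^ 2 = 2 + 2 * ∑ i, f i * g i := by
    simp only [add_sq, sum_add_distrib, hf1, hg1, mul_assoc, ← mul_sum]; ring
  have hminus : ∑ i, |f i - g i| ^ 2 = 2 - 2 * ∑ i, f i * g i := by
    simp only [sq_abs, sub_sq, sum_add_distrib, sum_sub_distrib, hf1, hg1, mul_assoc, ← mul_sum]
    ring
  calc (∑ i, |f i ^ 2 - g i ^ 2|) ^ 2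
      ≤ (∑ i, (f i + g i) ^ 2) * ∑ i, |f i - g i| ^ 2 :=
        hfactor ▸ sum_mul_sq_le_sq_mul_sq _ _ _
    _ = 4 * (1 - (∑ i, f i * g i) ^ 2) := by rw [hplus, hminus]; ring

theorem sq_sum_abs_norm_sq_sub_le (a b : ι → ℂ) (ha : ∑ i, ‖a i‖ ^ 2 = 1)
    (hb : ∑ i, ‖b i‖ ^ 2 = 1) :
    (∑ i, |‖a i‖ ^ 2 - ‖b i‖ ^ 2|) ^ 2 ≤ 4 * (1 - ‖∑ i, conj (a i) * b i‖ ^ 2) := by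
  have hreal := sq_sum_abs_sq_sub_sq_le (‖a ·‖) (‖b ·‖) (fun _ => norm_nonneg _)
    (fun _ => norm_nonneg _) ha hb
  have hinner : ‖∑ i, conj (a i) * b i‖ ≤ ∑ i, ‖a i‖ * ‖b i‖ :=
    (norm_sum_le _ _).trans_eq (by simp)
  have := pow_le_pow_left₀ (norm_nonneg _) hinner 2
  linarith

theorem sub_le_norm_sum_of_sub_le_norm_sq (b : ι → E) (hb : ∑ j, ‖b j‖ ^ 2 = 1) (c : ι)
    {η δ : ℝ} (hc : 1 - η ≤ ‖b c‖ ^ 2) (hδ : 0 ≤ δ)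
    (hηδ : (Fintype.card ι - 1) * η ≤ δ ^ 2) :
    1 - η - δ ≤ ‖∑ j, b j‖ := by
  classical
  have hsplit : b c + ∑ j ∈ univ.erase c, b j = ∑ j, b j := add_sum_erase _ _ (mem_univ c)
  have hrest : ‖b c‖ ^ 2 + ∑ j ∈ univ.erase c, ‖b j‖ ^ 2 = 1 :=
    (add_sum_erase _ (‖b ·‖ ^ 2) (mem_univ c)).trans hb
  have hcard : (#(univ.erase c) : ℝ) = Fintype.card ι - 1 := by
    rw [cast_card_erase_of_mem (mem_univ c), card_univ]
  have hrest_le : ‖∑ j ∈ univ.erase c, b j‖ ≤ δ := by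
    refine (sq_le_sq₀ (norm_nonneg _) hδ).1 ((norm_sum_sq_le_card_mul _ _).trans ?_)
    rw [hcard]
    nlinarith [sum_nonneg fun j (_ : j ∈ univ.erase c) => sq_nonneg ‖b j‖]
  have hc_le : ‖b c‖ ≤ 1 := by
    have := sum_nonneg fun j (_ : j ∈ univ.erase c) => sq_nonneg ‖b j‖
    nlinarith [norm_nonneg (b c)]
  have htri : ‖b c‖ ≤ ‖∑ j, b j‖ + ‖∑ j ∈ univ.erase c, b j‖ := by
    rw [← hsplit]; exact norm_le_add_norm_add _ _
  nlinarith [mul_le_mul_of_nonneg_left hc_le (norm_nonneg (b c))]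

theorem exists_dominant_of_one_sub_sum_mul_le (q q' : ι → ℝ) (hq : ∀ j, 0 ≤ q j)
    (hq' : ∀ j, 0 ≤ q' j) (h1 : ∑ j, q j = 1) (h1' : ∑ j, q' j = 1) {η : ℝ}
    (h : 1 - ∑ j, q j * q' j ≤ η) :
    ∃ c, 1 - η ≤ q c ∧ 1 - 2 * η ≤ q' c := by
  obtain ⟨c, -, hc⟩ := exists_max_image univ q (nonempty_of_sum_ne_zero (h1 ▸ one_ne_zero))
  have hq'_le : ∀ j, q' j ≤ 1 := fun j =>
    h1' ▸ single_le_sum (fun j _ => hq' j) (mem_univ j)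
  have hmax : ∑ j, q j * q' j ≤ q c := by
    calc ∑ j, q j * q' j ≤ ∑ j, q c * q' j :=
          sum_le_sum fun j _ => mul_le_mul_of_nonneg_right (hc j (mem_univ j)) (hq' j)
      _ = q c := by rw [← mul_sum, h1', mul_one]
  have hmiss : q c * (1 - q' c) ≤ 1 - ∑ j, q j * q' j := by
    calc q c * (1 - q' c) ≤ ∑ j, q j * (1 - q' j) :=
          single_le_sum (f := fun j => q j * (1 - q' j))
            (fun j _ => mul_nonneg (hq j) (sub_nonneg.2 (hq'_le j))) (mem_univ c)
      _ = 1 - ∑ j, q j * q' j := by simp only [mul_sub, mul_one, sum_sub_distrib, h1]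
  refine ⟨c, by linarith, ?_⟩
  nlinarith [hq' c, hq'_le c, hq c]

theorem norm_le_norm_add_of_sum_norm_sub_sq_le (w : ι → E) (v : E) {ε : ℝ} (hε : 0 ≤ ε)
    (h : ∑ i, ‖w i - v‖ ^ 2 ≤ ε ^ 2) (i i' : ι) :
    ‖w i‖ ≤ ‖w i'‖ + 2 * ε := by
  have hclose : ∀ k, ‖w k - v‖ ≤ ε := fun k =>
    (sq_le_sq₀ (norm_nonneg _) hε).1
      ((single_le_sum (f := fun k => ‖w k - v‖ ^ 2) (fun _ _ => sq_nonneg _) (mem_univ k)).trans h)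
  calc ‖w i‖ ≤ ‖w i'‖ + ‖w i - w i'‖ := by linarith [norm_sub_norm_le (w i) (w i')]
    _ ≤ ‖w i'‖ + (‖w i - v‖ + ‖w i' - v‖) := by
      gcongr
      simpa only [norm_sub_rev v] using norm_sub_le_norm_sub_add_norm_sub (w i) v (w i')
    _ ≤ ‖w i'‖ + 2 * ε := by linarith [hclose i, hclose i']

theorem sum_norm_mul_sq (a : ℂ) (b : ι → ℂ) (hb : ∑ j, ‖b j‖ ^ 2 = 1) :
    ∑ j, ‖a * b j‖ ^ 2 = ‖a‖ ^ 2 := by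
  simp only [norm_mul, mul_pow, ← mul_sum, hb, mul_one]

theorem sum_sum_ite_eq_mul_one_sub_sum_mul [DecidableEq ι] (x y : ℝ) (a b : ι → ℝ)
    (ha : ∑ j, a j = 1) (hb : ∑ j, b j = 1) :
    ∑ j, ∑ j', (if j = j' then 0 else x * a j * y * b j') = x * y * (1 - ∑ j, a j * b j) := by
  have hsplit : ∀ j j', (if j = j' then 0 else x * a j * y * b j')
      = x * y * (a j * b j') - if j = j' then x * y * (a j * b j') else 0 := by
    intro j j'; split_ifs <;> ring
  simp only [hsplit, sum_sub_distrib, Fintype.sum_ite_eq, ← mul_sum, hb, mul_one, ha]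
  ring

end Inequalities

theorem le_sum_sum_ite_adj {V ι : Type*} [Fintype V] [LinearOrder V] [Fintype ι]
    (G : SimpleGraph V) [DecidableRel G.Adj] (g : V → V → ι → ℝ) (hg : ∀ u v j, 0 ≤ g u v j)
    {x y : V} (hxy : G.Adj x y) (j : ι) :
    g x y j ≤ ∑ u, ∑ v, if G.Adj u v ∧ u < v then ∑ j, (g u v j + g v u j) else 0 := by
  have hterm : ∀ u v, 0 ≤ if G.Adj u v ∧ u < v then ∑ j, (g u v j + g v u j) else 0 := by
    intro u v; split_ifs
    exacts [sum_nonneg fun j _ => add_nonneg (hg u v j) (hg v u j), le_rfl]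
  have hpair : ∀ u v, G.Adj u v → u < v →
      g u v j + g v u j ≤ ∑ u, ∑ v, if G.Adj u v ∧ u < v then ∑ j, (g u v j + g v u j) else 0 := by
    intro u v huv hlt
    calc g u v j + g v u j ≤ ∑ j, (g u v j + g v u j) :=
          single_le_sum (f := fun j => g u v j + g v u j)
            (fun j _ => add_nonneg (hg u v j) (hg v u j)) (mem_univ j)
      _ = if G.Adj u v ∧ u < v then ∑ j, (g u v j + g v u j) else 0 := (if_pos ⟨huv, hlt⟩).symm
      _ ≤ ∑ v', if G.Adj u v' ∧ u < v' then ∑ j, (g u v' j + g v' u j) else 0 :=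
          single_le_sum (fun v' _ => hterm u v') (mem_univ v)
      _ ≤ _ := single_le_sum (fun u' _ => sum_nonneg fun v' _ => hterm u' v') (mem_univ u)
  rcases lt_or_gt_of_ne hxy.ne with hlt | hgt
  · linarith [hpair x y hxy hlt, hg y x j]
  · linarith [hpair y x hxy.symm hgt, hg y x j]

theorem norm_toEuc_sq {ι : Type*} [Fintype ι] (f : ι → ℂ) : ‖toEuc f‖ ^ 2 = ∑ i, ‖f i‖ ^ 2 := by
  rw [EuclideanSpace.norm_eq, Real.sq_sqrt (by positivity)]
  rfl

theorem norm_toEuc_uniform_sq {ι : Type*} [Fintype ι] (w : ι → ℂ) (z c : ℂ) :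
    ‖toEuc (fun q : ι × Fin 3 => (1 / 3 : ℂ) * w q.1 - (1 / (3 * c)) * z)‖ ^ 2
      = 1 / 3 * ∑ i, ‖w i - z / c‖ ^ 2 := by
  have hterm : ∀ i, (1 / 3 : ℂ) * w i - (1 / (3 * c)) * z = (1 / 3 : ℂ) * (w i - z / c) := by
    intro i; ring
  have hthird : ‖(1 / 3 : ℂ)‖ ^ 2 = 1 / 9 := by norm_num
  simp only [norm_toEuc_sq, Fintype.sum_prod_type, hterm, norm_mul, mul_pow, hthird, sum_const,
    card_univ, Fintype.card_fin, nsmul_eq_mul, mul_sum]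
  exact sum_congr rfl fun _ _ => by ring

section Tests

variable {V : Type*} [Fintype V] (α α' : V → ℂ) (β β' : V → Fin 3 → ℂ)

noncomputable def rejEq : ℝ :=
  1 - (1 / 2 : ℝ) * (1 + ‖∑ i, ∑ j, (starRingEnd ℂ) (α i * β i j) * (α' i * β' i j)‖ ^ 2)

noncomputable def rejSV : ℝ :=
  ∑ i, ∑ j, ∑ j', (if j = j' then 0 else ‖α i‖ ^ 2 * ‖β i j‖ ^ 2 * ‖α' i‖ ^ 2 * ‖β' i j'‖ ^ 2)

noncomputable def rejEdge [LinearOrder V] (G : SimpleGraph V) [DecidableRel G.Adj] : ℝ :=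
  ∑ u, ∑ v, if G.Adj u v ∧ u < v then ∑ j : Fin 3,
    (‖α u‖ ^ 2 * ‖β u j‖ ^ 2 * ‖α' v‖ ^ 2 * ‖β' v j‖ ^ 2
      + ‖α v‖ ^ 2 * ‖β v j‖ ^ 2 * ‖α' u‖ ^ 2 * ‖β' u j‖ ^ 2) else 0

variable {α α' β β'}

theorem sq_sum_abs_sub_le_rejEq (hα : ∑ i, ‖α i‖ ^ 2 = 1) (hα' : ∑ i, ‖α' i‖ ^ 2 = 1)
    (hβ : ∀ i, ∑ j, ‖β i j‖ ^ 2 = 1) (hβ' : ∀ i, ∑ j, ‖β' i j‖ ^ 2 = 1) :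
    (∑ i, ∑ j, |‖α i * β i j‖ ^ 2 - ‖α' i * β' i j‖ ^ 2|) ^ 2 ≤ 8 * rejEq α α' β β' := by
  have hunit : ∀ (a : V → ℂ) (b : V → Fin 3 → ℂ), ∑ i, ‖a i‖ ^ 2 = 1 →
      (∀ i, ∑ j, ‖b i j‖ ^ 2 = 1) → ∑ q : V × Fin 3, ‖a q.1 * b q.1 q.2‖ ^ 2 = 1 := by
    intro a b ha hb
    simp only [Fintype.sum_prod_type, sum_norm_mul_sq _ _ (hb _), ha]
  have := sq_sum_abs_norm_sq_sub_le _ _ (hunit α β hα hβ) (hunit α' β' hα' hβ')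
  simp only [Fintype.sum_prod_type] at this
  unfold rejEq
  linarith

theorem rejEq_nonneg (hα : ∑ i, ‖α i‖ ^ 2 = 1) (hα' : ∑ i, ‖α' i‖ ^ 2 = 1)
    (hβ : ∀ i, ∑ j, ‖β i j‖ ^ 2 = 1) (hβ' : ∀ i, ∑ j, ‖β' i j‖ ^ 2 = 1) :
    0 ≤ rejEq α α' β β' := by
  linarith [sq_sum_abs_sub_le_rejEq hα hα' hβ hβ',
    sq_nonneg (∑ i, ∑ j, |‖α i * β i j‖ ^ 2 - ‖α' i * β' i j‖ ^ 2|)]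

theorem sq_norm_sq_sub_le_rejEq (hα : ∑ i, ‖α i‖ ^ 2 = 1) (hα' : ∑ i, ‖α' i‖ ^ 2 = 1)
    (hβ : ∀ i, ∑ j, ‖β i j‖ ^ 2 = 1) (hβ' : ∀ i, ∑ j, ‖β' i j‖ ^ 2 = 1) (i : V) :
    (‖α i‖ ^ 2 - ‖α' i‖ ^ 2) ^ 2 ≤ 8 * rejEq α α' β β' := by
  have hvertex : |‖α i‖ ^ 2 - ‖α' i‖ ^ 2|
      ≤ ∑ i, ∑ j, |‖α i * β i j‖ ^ 2 - ‖α' i * β' i j‖ ^ 2| := by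
    calc |‖α i‖ ^ 2 - ‖α' i‖ ^ 2| = |∑ j, (‖α i * β i j‖ ^ 2 - ‖α' i * β' i j‖ ^ 2)| := by
          rw [sum_sub_distrib, sum_norm_mul_sq _ _ (hβ i), sum_norm_mul_sq _ _ (hβ' i)]
      _ ≤ ∑ j, |‖α i * β i j‖ ^ 2 - ‖α' i * β' i j‖ ^ 2| := abs_sum_le_sum_abs _ _
      _ ≤ _ := single_le_sum (f := fun i => ∑ j, |‖α i * β i j‖ ^ 2 - ‖α' i * β' i j‖ ^ 2|)
          (fun _ _ => sum_nonneg fun _ _ => abs_nonneg _) (mem_univ i)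
  calc (‖α i‖ ^ 2 - ‖α' i‖ ^ 2) ^ 2 = |‖α i‖ ^ 2 - ‖α' i‖ ^ 2| ^ 2 := (sq_abs _).symm
    _ ≤ _ := pow_le_pow_left₀ (abs_nonneg _) hvertex 2
    _ ≤ _ := sq_sum_abs_sub_le_rejEq hα hα' hβ hβ'

theorem rejSV_nonneg : 0 ≤ rejSV α α' β β' :=
  sum_nonneg fun _ _ => sum_nonneg fun _ _ => sum_nonneg fun _ _ => by split_ifs <;> positivity

theorem mul_one_sub_sum_le_rejSV (hβ : ∀ i, ∑ j, ‖β i j‖ ^ 2 = 1)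
    (hβ' : ∀ i, ∑ j, ‖β' i j‖ ^ 2 = 1) (i : V) :
    ‖α i‖ ^ 2 * ‖α' i‖ ^ 2 * (1 - ∑ j, ‖β i j‖ ^ 2 * ‖β' i j‖ ^ 2) ≤ rejSV α α' β β' := by
  rw [← sum_sum_ite_eq_mul_one_sub_sum_mul _ _ _ _ (hβ i) (hβ' i)]
  refine single_le_sum (f := fun i => ∑ j, ∑ j', (if j = j' then 0 else
    ‖α i‖ ^ 2 * ‖β i j‖ ^ 2 * ‖α' i‖ ^ 2 * ‖β' i j'‖ ^ 2)) (fun i _ => ?_) (mem_univ i)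
  exact sum_nonneg fun _ _ => sum_nonneg fun _ _ => by split_ifs <;> positivity

theorem exists_dominant_color (hβ : ∀ i, ∑ j, ‖β i j‖ ^ 2 = 1)
    (hβ' : ∀ i, ∑ j, ‖β' i j‖ ^ 2 = 1) {i : V} {a a' η : ℝ} (ha : 0 < a) (ha' : 0 < a')
    (hai : a ≤ ‖α i‖ ^ 2) (hai' : a' ≤ ‖α' i‖ ^ 2) (hsv : rejSV α α' β β' ≤ a * a' * η) :
    ∃ c, 1 - η ≤ ‖β i c‖ ^ 2 ∧ 1 - 2 * η ≤ ‖β' i c‖ ^ 2 := by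
  refine exists_dominant_of_one_sub_sum_mul_le _ _ (fun _ => sq_nonneg _) (fun _ => sq_nonneg _)
    (hβ i) (hβ' i) ?_
  by_contra! hη
  have hη0 : 0 ≤ η := nonneg_of_mul_nonneg_right (rejSV_nonneg.trans hsv) (by positivity)
  have hweight : a * a' ≤ ‖α i‖ ^ 2 * ‖α' i‖ ^ 2 := mul_le_mul hai hai' ha'.le (sq_nonneg _)
  have := mul_one_sub_sum_le_rejSV (α := α) (α' := α') hβ hβ' i
  nlinarith [mul_lt_mul_of_pos_left hη (mul_pos ha ha'),
    mul_le_mul_of_nonneg_right hweight (hη0.trans hη.le)]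

theorem rejEdge_nonneg [LinearOrder V] (G : SimpleGraph V) [DecidableRel G.Adj] :
    0 ≤ rejEdge α α' β β' G :=
  sum_nonneg fun _ _ => sum_nonneg fun _ _ => by split_ifs <;> positivity

theorem le_rejEdge_of_adj [LinearOrder V] {G : SimpleGraph V} [DecidableRel G.Adj] {x y : V}
    (hxy : G.Adj x y) (j : Fin 3) :
    ‖α x‖ ^ 2 * ‖β x j‖ ^ 2 * ‖α' y‖ ^ 2 * ‖β' y j‖ ^ 2 ≤ rejEdge α α' β β' G :=
  le_sum_sum_ite_adj G (fun u v j => ‖α u‖ ^ 2 * ‖β u j‖ ^ 2 * ‖α' v‖ ^ 2 * ‖β' v j‖ ^ 2)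
    (fun _ _ _ => by positivity) hxy j

end Tests

noncomputable def rejUnif {m : ℕ} (α : Fin m → ℂ) (β : Fin m → Fin 3 → ℂ) : ℝ :=
  ‖toEuc (fun q : Fin m × Fin 3 => (1 / 3 : ℂ) * (α q.1 * ∑ j', β q.1 j')
      - (1 / (3 * (m : ℂ))) * ∑ i', (α i' * ∑ j', β i' j'))‖ ^ 2

section Uniformity

variable {m : ℕ} {α : Fin m → ℂ} {β : Fin m → Fin 3 → ℂ}

theorem rejUnif_nonneg : 0 ≤ rejUnif α β := sq_nonneg _

theorem norm_le_norm_add_of_rejUnif_le {ε : ℝ} (hε : 0 ≤ ε) (h : 3 * rejUnif α β ≤ ε ^ 2)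
    (i i' : Fin m) : ‖α i * ∑ j, β i j‖ ≤ ‖α i' * ∑ j, β i' j‖ + 2 * ε := by
  have hunif : rejUnif α β = 1 / 3 * ∑ i, ‖α i * ∑ j, β i j - (∑ i, α i * ∑ j, β i j) / m‖ ^ 2 :=
    norm_toEuc_uniform_sq (fun i => α i * ∑ j, β i j) _ _
  exact norm_le_norm_add_of_sum_norm_sub_sq_le _ _ hε (by linarith) i i'

end Uniformity

section Soundness

variable {m : ℕ} {α α' : Fin m → ℂ} {β β' : Fin m → Fin 3 → ℂ}

theorem le_norm_sq_of_rej_le (hα : ∑ i, ‖α i‖ ^ 2 = 1) (hα' : ∑ i, ‖α' i‖ ^ 2 = 1)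
    (hβ : ∀ i, ∑ j, ‖β i j‖ ^ 2 = 1) (hβ' : ∀ i, ∑ j, ‖β' i j‖ ^ 2 = 1) {u : ℝ} (hu : 0 < u)
    (hu1 : u ≤ 1) {i₁ : Fin m} (hi₁ : u ≤ ‖α i₁‖ ^ 2)
    (heq : 8 * rejEq α α' β β' ≤ (u / 10 ^ 4) ^ 2) (hsv : rejSV α α' β β' ≤ u ^ 2 / 10 ^ 10)
    (hunif : 3 * rejUnif α β ≤ (u / 10 ^ 4) ^ 2) (i : Fin m) :
    3 / 10 * u ≤ ‖α i‖ ^ 2 ∧ 29 / 100 * u ≤ ‖α' i‖ ^ 2 := by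
  have hclose : ∀ i, |‖α i‖ ^ 2 - ‖α' i‖ ^ 2| ≤ u / 10 ^ 4 := fun i =>
    abs_le_of_sq_le_sq ((sq_norm_sq_sub_le_rejEq hα hα' hβ hβ' i).trans heq) (by positivity)
  have hi₁' : 9 / 10 * u ≤ ‖α' i₁‖ ^ 2 := by linarith [(abs_le.1 (hclose i₁)).2]
  obtain ⟨c, hc, -⟩ := exists_dominant_color (η := 1 / 10 ^ 9) hβ hβ' hu (by positivity) hi₁ hi₁'
    (by nlinarith)
  have hsum : 999 / 1000 ≤ ‖∑ j, β i₁ j‖ := by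
    have := sub_le_norm_sum_of_sub_le_norm_sq (β i₁) (hβ i₁) c hc (δ := 1 / 10 ^ 4) (by norm_num)
      (by norm_num)
    linarith
  set A := ‖α i₁ * ∑ j, β i₁ j‖
  set B := ‖α i * ∑ j, β i j‖
  have hA : 99 / 100 * u ≤ A ^ 2 := by
    have hsum2 : 99 / 100 ≤ ‖∑ j, β i₁ j‖ ^ 2 := by nlinarith
    simp only [A, norm_mul, mul_pow]
    nlinarith [mul_le_mul hi₁ hsum2 (by norm_num) (sq_nonneg _)]
  have hAB : A ≤ B + 2 * (u / 10 ^ 4) := norm_le_norm_add_of_rejUnif_le (by positivity) hunif i₁ i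
  have huA : u ≤ 2 * A := by
    by_contra! h
    nlinarith [mul_self_lt_mul_self (by positivity : 0 ≤ 2 * A) h]
  have hB : 9 / 10 * u ≤ B ^ 2 := by
    have hAB' : 9996 / 10000 * A ≤ B := by linarith
    nlinarith [mul_self_le_mul_self (by positivity) hAB']
  have hB3 : B ^ 2 ≤ 3 * ‖α i‖ ^ 2 := by
    have h3 := norm_sum_sq_le_card_mul univ (β i)
    rw [card_univ, Fintype.card_fin, hβ i, Nat.cast_ofNat, mul_one] at h3
    simp only [B, norm_mul, mul_pow]
    nlinarith [mul_le_mul_of_nonneg_left h3 (sq_nonneg ‖α i‖)]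
  exact ⟨by linarith, by linarith [(abs_le.1 (hclose i)).2]⟩

theorem exists_dominant_coloring (hα : ∑ i, ‖α i‖ ^ 2 = 1) (hα' : ∑ i, ‖α' i‖ ^ 2 = 1)
    (hβ : ∀ i, ∑ j, ‖β i j‖ ^ 2 = 1) (hβ' : ∀ i, ∑ j, ‖β' i j‖ ^ 2 = 1)
    (heq : rejEq α α' β β' < 1 / (10 ^ 10 * (m : ℝ) ^ 2))
    (hsv : rejSV α α' β β' < 1 / (10 ^ 10 * (m : ℝ) ^ 2))
    (hunif : rejUnif α β < 1 / (10 ^ 10 * (m : ℝ) ^ 2)) :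
    ∃ col : Fin m → Fin 3, ∀ i, 3 / 10 * (m : ℝ)⁻¹ ≤ ‖α i‖ ^ 2 ∧ 3 / 4 ≤ ‖β i (col i)‖ ^ 2 ∧
      29 / 100 * (m : ℝ)⁻¹ ≤ ‖α' i‖ ^ 2 ∧ 3 / 4 ≤ ‖β' i (col i)‖ ^ 2 := by
  have hne : (univ : Finset (Fin m)).Nonempty := nonempty_of_sum_ne_zero (hα ▸ one_ne_zero)
  have hm : (1 : ℝ) ≤ m := by obtain ⟨i₀, -⟩ := hne; exact_mod_cast i₀.pos
  set u := (m : ℝ)⁻¹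
  have hu : 0 < u := by positivity
  have hu1 : u ≤ 1 := inv_le_one_of_one_le₀ hm
  have hδ : 1 / (10 ^ 10 * (m : ℝ) ^ 2) = u ^ 2 / 10 ^ 10 := by ring
  rw [hδ] at heq hsv hunif
  obtain ⟨i₁, -, hi₁⟩ := exists_le_of_sum_le (f := fun _ => u) (g := fun i => ‖α i‖ ^ 2) hne
    (by simp [hα, u, mul_inv_cancel₀ (by positivity : (m : ℝ) ≠ 0)])
  have hweight := le_norm_sq_of_rej_le hα hα' hβ hβ' hu hu1 hi₁ (by nlinarith) hsv.le
    (by nlinarith)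
  have hcolor : ∀ i, ∃ c, 3 / 4 ≤ ‖β i c‖ ^ 2 ∧ 3 / 4 ≤ ‖β' i c‖ ^ 2 := by
    intro i
    obtain ⟨c, hc, hc'⟩ := exists_dominant_color (η := 1 / 10 ^ 8) hβ hβ' (by positivity)
      (by positivity) (hweight i).1 (hweight i).2 (by nlinarith)
    exact ⟨c, by linarith, by linarith⟩
  choose col hcol using hcolor
  exact ⟨col, fun i => ⟨(hweight i).1, (hcol i).1, (hweight i).2, (hcol i).2⟩⟩

theorem lt_rejEdge_of_dominant_coloring {G : SimpleGraph (Fin m)} [DecidableRel G.Adj]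
    (hG : ¬ G.Colorable 3) (col : Fin m → Fin 3)
    (hcol : ∀ i, 3 / 10 * (m : ℝ)⁻¹ ≤ ‖α i‖ ^ 2 ∧ 3 / 4 ≤ ‖β i (col i)‖ ^ 2 ∧
      29 / 100 * (m : ℝ)⁻¹ ≤ ‖α' i‖ ^ 2 ∧ 3 / 4 ≤ ‖β' i (col i)‖ ^ 2) :
    1 / (10 ^ 10 * (m : ℝ) ^ 2) < rejEdge α α' β β' G := by
  obtain ⟨x, y, hxy, hxy_col⟩ : ∃ x y, G.Adj x y ∧ col x = col y := by
    by_contra! h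
    exact hG ⟨SimpleGraph.Coloring.mk col fun hxy => h _ _ hxy⟩
  obtain ⟨hx, hxc, -, -⟩ := hcol x
  obtain ⟨-, -, hy, hyc⟩ := hcol y
  rw [← hxy_col] at hyc
  have hm : (0 : ℝ) < (m : ℝ)⁻¹ := by have := x.pos; positivity
  have hmono : 3 / 10 * (m : ℝ)⁻¹ * (3 / 4) * (29 / 100 * (m : ℝ)⁻¹) * (3 / 4)
      ≤ ‖α x‖ ^ 2 * ‖β x (col x)‖ ^ 2 * ‖α' y‖ ^ 2 * ‖β' y (col x)‖ ^ 2 := by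
    gcongr
  have hδ : 1 / (10 ^ 10 * (m : ℝ) ^ 2) = ((m : ℝ)⁻¹) ^ 2 / 10 ^ 10 := by ring
  nlinarith [le_rejEdge_of_adj (α := α) (α' := α') (β := β) (β' := β') hxy (col x)]

end Soundness

theorem blier_tapp_soundness_general (m : ℕ)
    (G : SimpleGraph (Fin m)) [DecidableRel G.Adj]
    (hG : ¬ G.Colorable 3)
    (α α' : Fin m → ℂ) (β β' : Fin m → Fin 3 → ℂ)
    (hα : ∑ i, ‖α i‖ ^ 2 = 1)
    (hα' : ∑ i, ‖α' i‖ ^ 2 = 1)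
    (hβ : ∀ i, ∑ j, ‖β i j‖ ^ 2 = 1)
    (hβ' : ∀ i, ∑ j, ‖β' i j‖ ^ 2 = 1) :
    (1 - (1 / 2 : ℝ) * (1 + ‖∑ i, ∑ j, (starRingEnd ℂ) (α i * β i j) * (α' i * β' i j)‖ ^ 2))
    + (∑ i, ∑ j, ∑ j', (if j = j' then 0 else
        ‖α i‖ ^ 2 * ‖β i j‖ ^ 2 *
          ‖α' i‖ ^ 2 * ‖β' i j'‖ ^ 2))
    + (∑ u, ∑ v, if G.Adj u v ∧ u < v then ∑ j : Fin 3,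
        (‖α u‖ ^ 2 * ‖β u j‖ ^ 2 *
            ‖α' v‖ ^ 2 * ‖β' v j‖ ^ 2
          + ‖α v‖ ^ 2 * ‖β v j‖ ^ 2 *
            ‖α' u‖ ^ 2 * ‖β' u j‖ ^ 2) else 0)
    + ‖toEuc (fun q : Fin m × Fin 3 =>
          (1 / 3 : ℂ) * (α q.1 * ∑ j', β q.1 j')
            - (1 / (3 * (m : ℂ))) * ∑ i', (α i' * ∑ j', β i' j'))‖ ^ 2
    ≥ 1 / (10 ^ 10 * (m : ℝ) ^ 2)
    ∧ (1 / 3 : ℝ) *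
      ((1 - (1 / 2 : ℝ) * (1 + ‖∑ i, ∑ j, (starRingEnd ℂ) (α i * β i j) * (α' i * β' i j)‖ ^ 2))
      + (∑ i, ∑ j, ∑ j', (if j = j' then 0 else
          ‖α i‖ ^ 2 * ‖β i j‖ ^ 2 *
            ‖α' i‖ ^ 2 * ‖β' i j'‖ ^ 2))
      + (∑ u, ∑ v, if G.Adj u v ∧ u < v then ∑ j : Fin 3,
          (‖α u‖ ^ 2 * ‖β u j‖ ^ 2 *
              ‖α' v‖ ^ 2 * ‖β' v j‖ ^ 2
            + ‖α v‖ ^ 2 * ‖β v j‖ ^ 2 *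
              ‖α' u‖ ^ 2 * ‖β' u j‖ ^ 2) else 0)
      + ‖toEuc (fun q : Fin m × Fin 3 =>
            (1 / 3 : ℂ) * (α q.1 * ∑ j', β q.1 j')
              - (1 / (3 * (m : ℂ))) * ∑ i', (α i' * ∑ j', β i' j'))‖ ^ 2)
    ≥ (1 / 3 : ℝ) * (1 / (10 ^ 10 * (m : ℝ) ^ 2)) := by
  have hsound : 1 / (10 ^ 10 * (m : ℝ) ^ 2)
      ≤ rejEq α α' β β' + rejSV α α' β β' + rejEdge α α' β β' G + rejUnif α β := by
    by_contra! hlt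
    have heq0 := rejEq_nonneg hα hα' hβ hβ'
    have hsv0 := rejSV_nonneg (α := α) (α' := α') (β := β) (β' := β')
    have hedge0 := rejEdge_nonneg (α := α) (α' := α') (β := β) (β' := β') G
    have hunif0 := rejUnif_nonneg (α := α) (β := β)
    obtain ⟨col, hcol⟩ := exists_dominant_coloring hα hα' hβ hβ' (by linarith) (by linarith)
      (by linarith)
    linarith [lt_rejEdge_of_dominant_coloring hG col hcol]
  exact ⟨hsound, mul_le_mul_of_nonneg_left hsound (by norm_num)⟩

/-- **Soundness of the Blier–Tapp verifier.**
If the simple graph `G` on `{0, …, m−1}` admits no proper 3-coloring, then for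
all decomposed unit vectors `ψ, φ ∈ ℂ^m ⊗ ℂ³` the total rejection probability
satisfies `R_eq + R_sv + R_edge(G) + R_unif(ψ) ≥ 10⁻¹⁰ m⁻²`; consequently the
verifier performing each of the three tests with probability `1/3` rejects with
probability at least `(1/3) · 10⁻¹⁰ m⁻²`. Each edge `{u,v}` of `G` is counted
once (as the ordered pair with `u < v`), with both orientation terms. -/
theorem blier_tapp_soundness (m : ℕ) (hm : 1 ≤ m)
    (G : SimpleGraph (Fin m)) [DecidableRel G.Adj]
    (hG : ¬ G.Colorable 3)
    (α α' : Fin m → ℂ) (β β' : Fin m → Fin 3 → ℂ)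
    (hα : ∑ i, ‖α i‖ ^ 2 = 1)
    (hα' : ∑ i, ‖α' i‖ ^ 2 = 1)
    (hβ : ∀ i, ∑ j, ‖β i j‖ ^ 2 = 1)
    (hβ' : ∀ i, ∑ j, ‖β' i j‖ ^ 2 = 1) :
    (1 - (1 / 2 : ℝ) * (1 + ‖∑ i, ∑ j, (starRingEnd ℂ) (α i * β i j) * (α' i * β' i j)‖ ^ 2))
    + (∑ i, ∑ j, ∑ j', (if j = j' then 0 else
        ‖α i‖ ^ 2 * ‖β i j‖ ^ 2 *
          ‖α' i‖ ^ 2 * ‖β' i j'‖ ^ 2))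
    + (∑ u, ∑ v, if G.Adj u v ∧ u < v then ∑ j : Fin 3,
        (‖α u‖ ^ 2 * ‖β u j‖ ^ 2 *
            ‖α' v‖ ^ 2 * ‖β' v j‖ ^ 2
          + ‖α v‖ ^ 2 * ‖β v j‖ ^ 2 *
            ‖α' u‖ ^ 2 * ‖β' u j‖ ^ 2) else 0)
    + ‖toEuc (fun q : Fin m × Fin 3 =>
          (1 / 3 : ℂ) * (α q.1 * ∑ j', β q.1 j')
            - (1 / (3 * (m : ℂ))) * ∑ i', (α i' * ∑ j', β i' j'))‖ ^ 2
    ≥ 1 / (10 ^ 10 * (m : ℝ) ^ 2)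
    ∧ (1 / 3 : ℝ) *
      ((1 - (1 / 2 : ℝ) * (1 + ‖∑ i, ∑ j, (starRingEnd ℂ) (α i * β i j) * (α' i * β' i j)‖ ^ 2))
      + (∑ i, ∑ j, ∑ j', (if j = j' then 0 else
          ‖α i‖ ^ 2 * ‖β i j‖ ^ 2 *
            ‖α' i‖ ^ 2 * ‖β' i j'‖ ^ 2))
      + (∑ u, ∑ v, if G.Adj u v ∧ u < v then ∑ j : Fin 3,
          (‖α u‖ ^ 2 * ‖β u j‖ ^ 2 *
              ‖α' v‖ ^ 2 * ‖β' v j‖ ^ 2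
            + ‖α v‖ ^ 2 * ‖β v j‖ ^ 2 *
              ‖α' u‖ ^ 2 * ‖β' u j‖ ^ 2) else 0)
      + ‖toEuc (fun q : Fin m × Fin 3 =>
            (1 / 3 : ℂ) * (α q.1 * ∑ j', β q.1 j')
              - (1 / (3 * (m : ℂ))) * ∑ i', (α i' * ∑ j', β i' j'))‖ ^ 2)
    ≥ (1 / 3 : ℝ) * (1 / (10 ^ 10 * (m : ℝ) ^ 2)) :=
  blier_tapp_soundness_general m G hG α α' β β' hα hα' hβ hβ'
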